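/- Let s ≥ 2, k ≥ 2, and n = sk + 1. Then the chromatic number of F_n^s equals s + 1. -/

import Mathlib

/-!
Colour `x ∈ [1, s k]` by `x mod s` and the last vertex `s k + 1` by an extra colour: two vertices
of `[1, s k]` with the same residue are at distance between `s` and `s (k - 1)`, hence at cyclic
distance at least `s`. Conversely, an independent set `T` has all its points within `s k + 1 - s`
of its least element `a`, and consecutive points at least `s` apart, so `x ↦ (x - a) / s` embeds
`T` into `[0, k)`. Since `s k + 1 > s k`, any `s`-colouring has a colour class with more than `k`
vertices, which is impossible.
-/

/-- Cyclic distance `min (|x-y|, n - |x-y|)` on `ℤ/nℤ` for `x, y ∈ {1,…,n}`. -/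
def cdist (n x y : ℕ) : ℕ := min (max x y - min x y) (n - (max x y - min x y))

/-- The graph `F_n^s` on vertex set `[n] = {1,…,n}`: distinct `x, y` are adjacent
iff their cyclic distance is `< s`. -/
def Fgraph (n s : ℕ) : SimpleGraph ℕ :=
  SimpleGraph.fromRel (fun x y => x ∈ Finset.Icc 1 n ∧ y ∈ Finset.Icc 1 n ∧ cdist n x y < s)

open Finset SimpleGraph

lemma cdist_of_le {n x y : ℕ} (h : x ≤ y) : cdist n x y = min (y - x) (n - (y - x)) := by
  rw [cdist, max_eq_right h, min_eq_left h]

lemma cdist_comm (n x y : ℕ) : cdist n x y = cdist n y x := by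
  rw [cdist, max_comm, min_comm x y, cdist]

lemma le_cdist_of_mod_eq {s k a b : ℕ} (hab : a < b) (ha : 1 ≤ a) (hb : b ≤ s * k)
    (h : a % s = b % s) : s ≤ cdist (s * k + 1) a b := by
  obtain ⟨m, hm⟩ := (Nat.modEq_iff_dvd' hab.le).1 h
  have hm_pos : 0 < m := Nat.pos_of_ne_zero (by rintro rfl; omega)
  have hmk : s * (m + 1) ≤ s * k :=
    Nat.mul_le_mul_left s (Nat.lt_of_mul_lt_mul_left (a := s) (by omega))
  rw [Nat.mul_succ] at hmk
  rw [cdist_of_le hab.le, hm, le_min_iff]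
  exact ⟨Nat.le_mul_of_pos_right s hm_pos, by omega⟩

namespace Fgraph

variable {n s k : ℕ}

lemma adj_iff {x y : ℕ} :
    (Fgraph n s).Adj x y ↔ x ≠ y ∧ x ∈ Icc 1 n ∧ y ∈ Icc 1 n ∧ cdist n x y < s := by
  rw [Fgraph, fromRel_adj, cdist_comm n y x]
  tauto

lemma colorable (hs : 0 < s) : (Fgraph (s * k + 1) s).Colorable (s + 1) := by
  let color (x : ℕ) : Fin (s + 1) :=
    if x = s * k + 1 then Fin.last s else ⟨x % s, by have := Nat.mod_lt x hs; omega⟩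
  have hcolor : ∀ {a b}, a < b → (Fgraph (s * k + 1) s).Adj a b → color a ≠ color b := by
    intro a b hab hadj hc
    obtain ⟨-, ha, hb, hd⟩ := adj_iff.1 hadj
    rw [mem_Icc] at ha hb
    have ha' : a ≠ s * k + 1 := by omega
    by_cases hb' : b = s * k + 1
    · simp only [color, if_neg ha', if_pos hb', Fin.ext_iff, Fin.val_last] at hc
      exact (Nat.mod_lt a hs).ne hc
    · simp only [color, if_neg ha', if_neg hb', Fin.ext_iff] at hc
      exact hd.not_ge (le_cdist_of_mod_eq hab ha.1 (by omega) hc)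
  refine ⟨Coloring.mk color fun {a b} hadj ↦ ?_⟩
  rcases lt_or_gt_of_ne hadj.ne with h | h
  · exact hcolor h hadj
  · exact (hcolor h hadj.symm).symm

lemma card_le_of_isIndepSet (hs : 2 ≤ s) (hk : 0 < k) {T : Finset ℕ}
    (hT : T ⊆ Icc 1 (s * k + 1)) (hind : (Fgraph (s * k + 1) s).IsIndepSet T) : #T ≤ k := by
  have hsep : ∀ x ∈ T, ∀ y ∈ T, x < y → s ≤ y - x ∧ s ≤ s * k + 1 - (y - x) := by
    intro x hx y hy hxy
    have hd : s ≤ cdist (s * k + 1) x y := by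
      by_contra! hd
      exact hind hx hy hxy.ne (adj_iff.2 ⟨hxy.ne, hT hx, hT hy, hd⟩)
    rw [cdist_of_le hxy.le] at hd
    exact le_min_iff.1 hd
  rcases T.eq_empty_or_nonempty with rfl | hne
  · simp
  set a := T.min' hne
  have hmaps : ∀ x ∈ T, (x - a) / s ∈ range k := by
    intro x hx
    rw [mem_range, Nat.div_lt_iff_lt_mul (by omega), Nat.mul_comm k s]
    rcases (T.min'_le x hx).lt_or_eq with hax | hax
    · have := (hsep a (T.min'_mem hne) x hx hax).2
      omega
    · rw [← hax, Nat.sub_self]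
      exact Nat.mul_pos (by omega) hk
  have hmono : StrictMonoOn (fun x ↦ (x - a) / s) T := by
    intro x hx y hy hxy
    have hax := T.min'_le x hx
    have hgap := (hsep x hx y hy hxy).1
    calc (x - a) / s < (x - a) / s + 1 := Nat.lt_succ_self _
      _ = (x - a + s) / s := (Nat.add_div_right _ (by omega)).symm
      _ ≤ (y - a) / s := Nat.div_le_div_right (by omega)
  simpa using card_le_card_of_injOn _ hmaps hmono.injOn

lemma not_colorable (hs : 2 ≤ s) (hk : 0 < k) : ¬(Fgraph (s * k + 1) s).Colorable s := by
  rintro ⟨C⟩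
  obtain ⟨c, -, hc⟩ := exists_lt_card_fiber_of_mul_lt_card_of_maps_to (s := Icc 1 (s * k + 1))
    (f := C) (n := k) (fun _ _ ↦ mem_univ _) (by simp)
  refine hc.not_ge (card_le_of_isIndepSet hs hk (filter_subset _ _) ?_)
  exact (C.isIndepSet_colorClass c).mono fun x hx ↦ (mem_filter.1 hx).2

end Fgraph

/-- For `s ≥ 2`, `k ≥ 2` and `n = s*k + 1`, the chromatic number of `F_n^s`
equals `s + 1`. -/
theorem stmt_11 (s k : ℕ) (hs : 2 ≤ s) (hk : 2 ≤ k) :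
    (Fgraph (s * k + 1) s).chromaticNumber = ((s + 1 : ℕ) : ℕ∞) := by
  rw [Nat.cast_succ, chromaticNumber_eq_iff_colorable_not_colorable]
  exact ⟨Fgraph.colorable (by omega), Fgraph.not_colorable hs (by omega)⟩
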